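/- Neyman orthogonality of the APO score: let φ(h; ψ, μ, ω) = μ(x) + 1{d'=d, z'=z}·(y − μ(x))/ω(x) − ψ. For perturbations μ_r = μ + r(μ̃ − μ) and ω_r = ω + r(ω̃ − ω), the Gateaux derivative of E[φ(H; ψ, μ_r, ω_r) | X=x] with respect to r, evaluated at r = 0 and at the true nuisance functions μ_d(z,·), ω_{d,z}(·), equals zero. -/

import Mathlib

open Finset
open scoped BigOperators Classical

noncomputable section

/-- Expectation with respect to a probability mass function on a finite sample space. -/
def pExp {Ω : Type*} [Fintype Ω] (p : Ω → ℝ) (f : Ω → ℝ) : ℝ := ∑ ω, p ω * f ω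

/-- Probability of an event. -/
def pPr {Ω : Type*} [Fintype Ω] (p : Ω → ℝ) (A : Set Ω) : ℝ :=
  ∑ ω, if ω ∈ A then p ω else 0

/-- Elementary conditional expectation given an event of positive probability. -/
def pCE {Ω : Type*} [Fintype Ω] (p : Ω → ℝ) (f : Ω → ℝ) (A : Set Ω) : ℝ :=
  (∑ ω, if ω ∈ A then p ω * f ω else 0) / pPr p A

/-! Conditioning on `X = x` freezes the nuisances at two numbers `m` and `e`, and the conditional
mean of the score becomes `m - ψ + ω₀ (μ₀ - m) / e`, where `μ₀` and `ω₀` are the true regression and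
propensity at `x`. At `(m, e) = (μ₀, ω₀)` its partial derivative in `m` is `1 - ω₀ / e = 0` and
its partial derivative in `e` is a multiple of `μ₀ - m = 0`. -/

section ConditionalExpectation

variable {Ω : Type*} [Fintype Ω] (p : Ω → ℝ)

theorem pCE_congr {f g : Ω → ℝ} {A : Set Ω} (h : ∀ ω ∈ A, f ω = g ω) :
    pCE p f A = pCE p g A := by
  unfold pCE
  congr 1
  exact Finset.sum_congr rfl fun ω _ => by split_ifs with hω <;> simp [h ω, hω]

theorem pCE_const {A : Set Ω} (hA : pPr p A ≠ 0) (c : ℝ) : pCE p (fun _ => c) A = c := by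
  unfold pCE pPr at *
  rw [div_eq_iff hA, Finset.mul_sum]
  exact Finset.sum_congr rfl fun ω _ => by split_ifs <;> ring

theorem pCE_add (f g : Ω → ℝ) (A : Set Ω) :
    pCE p (fun ω => f ω + g ω) A = pCE p f A + pCE p g A := by
  simp only [pCE, ← add_div, ← Finset.sum_add_distrib, mul_add, ite_add_zero]

theorem pCE_div_const (f : Ω → ℝ) (A : Set Ω) (c : ℝ) :
    pCE p (fun ω => f ω / c) A = pCE p f A / c := by
  simp only [pCE, div_right_comm _ c, Finset.sum_div, ite_div, zero_div, mul_div_assoc]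

theorem pCE_sub_const {A : Set Ω} (hA : pPr p A ≠ 0) (f : Ω → ℝ) (c : ℝ) :
    pCE p (fun ω => f ω - c) A = pCE p f A - c := by
  simp only [sub_eq_add_neg, pCE_add, pCE_const p hA]

theorem pCE_ite_one_mul (T : Ω → Prop) [DecidablePred T] (f : Ω → ℝ) {A : Set Ω}
    (hTA : pPr p {ω | T ω ∧ ω ∈ A} ≠ 0) :
    pCE p (fun ω => (if T ω then 1 else 0) * f ω) A =
      pPr p {ω | T ω ∧ ω ∈ A} / pPr p A * pCE p f {ω | T ω ∧ ω ∈ A} := by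
  have hnum : (∑ ω, if ω ∈ A then p ω * ((if T ω then 1 else 0) * f ω) else 0) =
      ∑ ω, if ω ∈ {ω | T ω ∧ ω ∈ A} then p ω * f ω else 0 :=
    Finset.sum_congr rfl fun ω _ => by by_cases hT : T ω <;> by_cases hω : ω ∈ A <;> simp [hT, hω]
  rw [pCE, pCE, hnum]
  field_simp

end ConditionalExpectation

section ScoreMean

variable {Ω 𝕏 : Type*} [Fintype Ω]

/-- The score `φ(·; ψ, m, e)`, with the cell `{D = d, Z = z}` abstracted to a predicate `T`. -/
def apoScore (T : Ω → Prop) [DecidablePred T] (X : Ω → 𝕏) (Y : Ω → ℝ) (ψ : ℝ)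
    (m e : 𝕏 → ℝ) (ω : Ω) : ℝ :=
  m (X ω) + (if T ω then 1 else 0) * (Y ω - m (X ω)) / e (X ω) - ψ

def apoScoreMean (μ₀ ω₀ ψ m e : ℝ) : ℝ := m - ψ + ω₀ * (μ₀ - m) / e

theorem pCE_apoScore (p : Ω → ℝ) (T : Ω → Prop) [DecidablePred T] (X : Ω → 𝕏) (Y : Ω → ℝ)
    (ψ : ℝ) (m e : 𝕏 → ℝ) (x : 𝕏) (hX : pPr p {ω | X ω = x} ≠ 0)
    (hTX : pPr p {ω | T ω ∧ X ω = x} ≠ 0) :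
    pCE p (apoScore T X Y ψ m e) {ω | X ω = x} =
      apoScoreMean (pCE p Y {ω | T ω ∧ X ω = x})
        (pPr p {ω | T ω ∧ X ω = x} / pPr p {ω | X ω = x}) ψ (m x) (e x) := by
  have hscore : ∀ ω ∈ {ω | X ω = x}, apoScore T X Y ψ m e ω =
      (m x - ψ) + (if T ω then 1 else 0) * (Y ω - m x) / e x := by
    rintro ω rfl
    unfold apoScore
    ring
  rw [pCE_congr p hscore, pCE_add, pCE_const p hX, pCE_div_const,
    pCE_ite_one_mul p T _ (A := {ω | X ω = x}) hTX]
  simp only [Set.mem_ofPred_eq]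
  rw [pCE_sub_const p hTX]
  rfl

theorem hasDerivAt_apoScoreMean_line {μ₀ ω₀ : ℝ} (hω₀ : ω₀ ≠ 0) (ψ δ ε : ℝ) :
    HasDerivAt (fun r => apoScoreMean μ₀ ω₀ ψ (μ₀ + r * δ) (ω₀ + r * ε)) 0 0 := by
  have hm : HasDerivAt (fun r : ℝ => μ₀ + r * δ) δ 0 := by
    simpa using ((hasDerivAt_id (0 : ℝ)).mul_const δ).const_add μ₀
  have he : HasDerivAt (fun r : ℝ => ω₀ + r * ε) ε 0 := by
    simpa using ((hasDerivAt_id (0 : ℝ)).mul_const ε).const_add ω₀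
  have hcorr := ((hm.const_sub μ₀).const_mul ω₀).div he (by simpa using hω₀)
  refine ((hm.sub_const ψ).add hcorr).congr_deriv ?_
  simp only [zero_mul, add_zero, sub_self, mul_zero, sub_zero]
  field_simp
  ring

end ScoreMean

theorem neyman_orthogonality_general
    {Ω 𝕏 : Type*} [Fintype Ω] [Fintype 𝕏]
    (p : Ω → ℝ)
    (D Z : Ω → ℕ)
    (X : Ω → 𝕏) (Y : Ω → ℝ)
    (d z : ℕ) (psi : ℝ)
    (hposX : ∀ x, 0 < pPr p {ω | X ω = x})
    (hpos : ∀ x, 0 < pPr p {ω | D ω = d ∧ Z ω = z ∧ X ω = x})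
    (muT omT : 𝕏 → ℝ)
    (hmuT : ∀ x, muT x = pCE p Y {ω | D ω = d ∧ Z ω = z ∧ X ω = x})
    (homT : ∀ x, omT x = pPr p {ω | D ω = d ∧ Z ω = z ∧ X ω = x} / pPr p {ω | X ω = x})
    (hom01 : ∀ x, 0 < omT x ∧ omT x < 1)
    (muP omP : 𝕏 → ℝ) (x : 𝕏) :
    deriv (fun r : ℝ =>
        pCE p (fun ω =>
            (muT (X ω) + r * (muP (X ω) - muT (X ω)))
              + (if D ω = d ∧ Z ω = z then (1:ℝ) else 0) *
                  (Y ω - (muT (X ω) + r * (muP (X ω) - muT (X ω)))) /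
                  (omT (X ω) + r * (omP (X ω) - omT (X ω)))
              - psi)
          {ω | X ω = x}) 0 = 0 := by
  have hcell : {ω | (D ω = d ∧ Z ω = z) ∧ X ω = x} = {ω | D ω = d ∧ Z ω = z ∧ X ω = x} := by
    simp only [and_assoc]
  refine ((hasDerivAt_apoScoreMean_line (μ₀ := muT x) (hom01 x).1.ne' psi (muP x - muT x)
    (omP x - omT x)).congr_of_eventuallyEq (Filter.Eventually.of_forall fun r => ?_)).deriv
  refine (pCE_apoScore p (fun ω => D ω = d ∧ Z ω = z) X Y psi (fun x => muT x + r * (muP x - muT x))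
    (fun x => omT x + r * (omP x - omT x)) x (hposX x).ne' (hcell ▸ (hpos x).ne')).trans ?_
  rw [hcell, ← hmuT x, ← homT x]

/-- Neyman orthogonality of the APO score: the Gateaux derivative of the conditional
expectation of the score with respect to perturbations of the nuisance functions,
evaluated at the true nuisances, is zero. -/
theorem neyman_orthogonality
    {Ω 𝕏 : Type*} [Fintype Ω] [Fintype 𝕏]
    (p : Ω → ℝ) (hp : ∀ ω, 0 ≤ p ω) (hpsum : ∑ ω, p ω = 1)
    (D Z : Ω → ℕ) (hD : ∀ ω, D ω = 0 ∨ D ω = 1) (hZ : ∀ ω, Z ω = 0 ∨ Z ω = 1)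
    (X : Ω → 𝕏) (Y : Ω → ℝ)
    (d z : ℕ) (psi : ℝ)
    (hposX : ∀ x, 0 < pPr p {ω | X ω = x})
    (hpos : ∀ x, 0 < pPr p {ω | D ω = d ∧ Z ω = z ∧ X ω = x})
    (muT omT : 𝕏 → ℝ)
    (hmuT : ∀ x, muT x = pCE p Y {ω | D ω = d ∧ Z ω = z ∧ X ω = x})
    (homT : ∀ x, omT x = pPr p {ω | D ω = d ∧ Z ω = z ∧ X ω = x} / pPr p {ω | X ω = x})
    (hom01 : ∀ x, 0 < omT x ∧ omT x < 1)
    (muP omP : 𝕏 → ℝ) (x : 𝕏) :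
    deriv (fun r : ℝ =>
        pCE p (fun ω =>
            (muT (X ω) + r * (muP (X ω) - muT (X ω)))
              + (if D ω = d ∧ Z ω = z then (1:ℝ) else 0) *
                  (Y ω - (muT (X ω) + r * (muP (X ω) - muT (X ω)))) /
                  (omT (X ω) + r * (omP (X ω) - omT (X ω)))
              - psi)
          {ω | X ω = x}) 0 = 0 :=
  neyman_orthogonality_general p D Z X Y d z psi hposX hpos muT omT hmuT homT hom01 muP omP x
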